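/- arXiv:math/0001144 — 4 statements merged into one kernel-verified Lean document; each statement's English description precedes it below -/
import Mathlib

section
/- The replacement matrix R of p(x) = a₀x^m + a₁x^{m-1} + ⋯ + a_m satisfies the monic integer polynomial identity R^m + a₁R^{m-1} + a₀a₂R^{m-2} + a₀²a₃R^{m-3} + ⋯ + a₀^{m-1}a_m·I = 0. -/
/-!
The polynomial `x^m + a₁x^{m-1} + a₀a₂x^{m-2} + ⋯ + a₀^{m-1}a_m` is the characteristic
polynomial of `R`, so the identity is Cayley–Hamilton. Expanding `det (X - R)` along the last
column gives the Horner recursion `χₙ₊₁ = X χₙ + a₀ⁿ aₙ₊₁`: the entry in the bottom corner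
contributes `X` times the characteristic polynomial of the leading `n × n` block, which is again
a replacement matrix, and the entry `a_{n+1}` in the top corner has an upper triangular minor
with diagonal `-a₀`.
-/

open Finset Matrix Polynomial

variable {S : Type*} [CommRing S]

theorem Matrix.charmatrix_submatrix {ι κ : Type*} [Fintype ι] [DecidableEq ι] [Fintype κ]
    [DecidableEq κ] (M : Matrix ι ι S) {e : κ → ι} (he : Function.Injective e) :
    (charmatrix M).submatrix e e = charmatrix (M.submatrix e e) := by
  ext i j : 1
  simp [charmatrix_apply, diagonal_apply, he.eq_iff]

def replacementMatrix (a : ℕ → S) (m : ℕ) : Matrix (Fin m) (Fin m) S :=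
  Matrix.of fun i j => if (i : ℕ) = 0 then -a (j + 1) else if (i : ℕ) = j + 1 then a 0 else 0

noncomputable def replacementPoly (a : ℕ → S) (m : ℕ) : S[X] :=
  X ^ m + ∑ k ∈ Icc 1 m, C (a 0 ^ (k - 1) * a k) * X ^ (m - k)

theorem replacementPoly_succ (a : ℕ → S) (n : ℕ) :
    replacementPoly a (n + 1) = X * replacementPoly a n + C (a 0 ^ n * a (n + 1)) := by
  rw [replacementPoly, replacementPoly, sum_Icc_succ_top (by omega), Nat.sub_self, pow_zero,
    mul_one, Nat.add_sub_cancel, mul_add, mul_sum, pow_succ', add_assoc]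
  congr 2
  refine sum_congr rfl fun k hk => ?_
  rw [Nat.sub_add_comm (mem_Icc.mp hk).2, pow_succ']
  ring

namespace replacementMatrix

variable (a : ℕ → S) (n : ℕ)

theorem submatrix_castSucc :
    (replacementMatrix a (n + 1)).submatrix Fin.castSucc Fin.castSucc = replacementMatrix a n :=
  rfl

theorem det_charmatrix_submatrix_succ_castSucc :
    ((replacementMatrix a (n + 1)).charmatrix.submatrix Fin.succ Fin.castSucc).det
      = (-C (a 0)) ^ n := by
  rw [det_of_isUpperTriangular]
  · simp only [submatrix_apply, charmatrix_apply, replacementMatrix, of_apply, diagonal_apply,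
      Fin.val_succ, Fin.val_castSucc, Fin.ext_iff]
    simp
  · intro i j hij
    change (j : ℕ) < i at hij
    simp only [submatrix_apply, charmatrix_apply, replacementMatrix, of_apply, diagonal_apply,
      Fin.val_succ, Fin.val_castSucc, Fin.ext_iff]
    simp [show (i : ℕ) + 1 ≠ j by omega, show (i : ℕ) ≠ j by omega]

theorem charmatrix_apply_last (i : Fin (n + 1)) :
    (replacementMatrix a (n + 1)).charmatrix i (Fin.last n)
      = (if i = Fin.last n then X else 0) + (if i = 0 then C (a (n + 1)) else 0) := by
  simp only [charmatrix_apply, replacementMatrix, of_apply, diagonal_apply, Fin.val_last,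
    Fin.ext_iff, Fin.val_zero]
  have hi : (i : ℕ) ≠ n + 1 := i.isLt.ne
  split_ifs <;> simp_all

theorem charpoly_succ :
    (replacementMatrix a (n + 1)).charpoly
      = X * (replacementMatrix a n).charpoly + C (a 0 ^ n * a (n + 1)) := by
  rw [charpoly, det_succ_column _ (Fin.last n)]
  simp only [charmatrix_apply_last, mul_add, add_mul, sum_add_distrib, mul_ite, ite_mul,
    mul_zero, zero_mul, sum_ite_eq', mem_univ, if_true, Fin.succAbove_last, Fin.succAbove_zero,
    det_charmatrix_submatrix_succ_castSucc, Fin.val_last, Fin.val_zero]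
  rw [Matrix.charmatrix_submatrix _ (Fin.castSucc_injective n), submatrix_castSucc, charpoly,
    C_mul, C_pow]
  have h : (-1 : S[X]) ^ (n + n) = 1 := by rw [← two_mul, pow_mul]; simp
  linear_combination (X * (replacementMatrix a n).charmatrix.det + C (a (n + 1)) * C (a 0) ^ n) * h

theorem charpoly_eq_replacementPoly : (replacementMatrix a n).charpoly = replacementPoly a n := by
  induction n with
  | zero => simp [replacementPoly]
  | succ n ih => rw [charpoly_succ, ih, replacementPoly_succ]

theorem aeval_replacementPoly : aeval (replacementMatrix a n) (replacementPoly a n) = 0 := by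
  rw [← charpoly_eq_replacementPoly, aeval_self_charpoly]

end replacementMatrix

theorem replacement_matrix_monic_identity_general
    (m : ℕ) (a : ℕ → ℤ)
    (R : Matrix (Fin m) (Fin m) ℤ)
    (hR : ∀ i j, R i j =
      if (i : ℕ) = 0 then -a ((j : ℕ) + 1)
      else if (i : ℕ) = (j : ℕ) + 1 then a 0 else 0) :
    R ^ m + ∑ k ∈ Finset.Icc 1 m, ((a 0) ^ (k - 1) * a k) • R ^ (m - k) = 0 := by
  obtain rfl : R = replacementMatrix a m := Matrix.ext hR
  simpa [replacementPoly, Algebra.smul_def] using replacementMatrix.aeval_replacementPoly a m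

theorem replacement_matrix_monic_identity
    (m : ℕ) (hm : 0 < m) (a : ℕ → ℤ) (ha : a 0 ≠ 0)
    (R : Matrix (Fin m) (Fin m) ℤ)
    (hR : ∀ i j, R i j =
      if (i : ℕ) = 0 then -a ((j : ℕ) + 1)
      else if (i : ℕ) = (j : ℕ) + 1 then a 0 else 0) :
    R ^ m + ∑ k ∈ Finset.Icc 1 m, ((a 0) ^ (k - 1) * a k) • R ^ (m - k) = 0 :=
  replacement_matrix_monic_identity_general m a R hR
end

section
/- Define sequences S⁽¹⁾, S⁽²⁾ : ℕ → ℤ by S⁽¹⁾₀ = 1, S⁽¹⁾₁ = -2, S⁽²⁾₀ = 0, S⁽²⁾₁ = 2, and for j ≥ 2, Sⱼ⁽ⁱ⁾ = -2Sⱼ₋₁⁽ⁱ⁾ + 2Sⱼ₋₂⁽ⁱ⁾. Then the ratio S⁽¹⁾ⱼ / S⁽²⁾ⱼ tends to (-1-√3)/2 as j → ∞. -/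
open Filter

theorem ratio_tendsto_largest_root
    (S1 S2 : ℕ → ℤ)
    (h10 : S1 0 = 1) (h11 : S1 1 = -2) (h20 : S2 0 = 0) (h21 : S2 1 = 2)
    (hrec1 : ∀ j, S1 (j + 2) = -2 * S1 (j + 1) + 2 * S1 j)
    (hrec2 : ∀ j, S2 (j + 2) = -2 * S2 (j + 1) + 2 * S2 j) :
    Tendsto (fun j => (S1 j : ℝ) / (S2 j)) atTop
      (nhds ((-1 - Real.sqrt 3) / 2)) := by
  have hs3 : Real.sqrt 3 ^ 2 = 3 := Real.sq_sqrt (by norm_num)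
  have hs3nn : (0:ℝ) ≤ Real.sqrt 3 := Real.sqrt_nonneg 3
  set s := Real.sqrt 3 with hs
  set L : ℝ := (-1 - s) / 2 with hL
  set a : ℝ := s - 1 with ha
  have ha2 : a ^ 2 = -2 * a + 2 := by
    rw [ha]; nlinarith [hs3]
  have hs1 : (1:ℝ) ≤ s := by nlinarith [hs3, hs3nn]
  have hs2 : s < 2 := by nlinarith [hs3, hs3nn]
  have ha0 : 0 ≤ a := by rw [ha]; linarith
  have ha1 : a < 1 := by rw [ha]; linarith
  -- key closed-form relation
  have key : ∀ j, (S1 j : ℝ) = L * S2 j + a ^ j := by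
    intro j
    induction j using Nat.twoStepInduction with
    | zero => simp [h10, h20]
    | one =>
      rw [h11, h21, hL, ha]
      push_cast
      ring
    | more j ih1 ih2 =>
      rw [hrec1 j, hrec2 j]
      push_cast
      rw [ih1, ih2]
      have : a ^ (j + 2) = a ^ j * a ^ 2 := by ring
      rw [this, ha2]
      ring
  -- growth of S2
  have hS2 : ∀ j, (2:ℤ) ≤ (-1)^j * S2 (j+1) ∧ (2:ℤ) ≤ (-1)^(j+1) * S2 (j+2) := by
    intro j
    induction j with
    | zero =>
      constructor
      · simp [h21]
      · have := hrec2 0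
        rw [h21, h20] at this
        simp [this]
    | succ j ih =>
      obtain ⟨ih1, ih2⟩ := ih
      refine ⟨ih2, ?_⟩
      have hr := hrec2 (j+1)
      have h1 : ((-1:ℤ))^(j+1+1) * S2 (j+1+2) =
          2 * ((-1)^(j+1) * S2 (j+2)) + 2 * ((-1)^j * S2 (j+1)) := by
        rw [hr]; ring
      linarith [h1, ih1, ih2]
  have hS2abs : ∀ j, (2:ℤ) ≤ |S2 (j+1)| := by
    intro j
    have h := (hS2 j).1
    have h2 : (2:ℤ) ≤ |(-1)^j * S2 (j+1)| := le_trans h (le_abs_self _)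
    rwa [abs_mul, abs_pow, abs_neg, abs_one, one_pow, one_mul] at h2
  have hS2big : ∀ j, (2:ℝ) ≤ |(S2 (j+1) : ℝ)| := by
    intro j
    have := hS2abs j
    calc (2:ℝ) = ((2:ℤ):ℝ) := by norm_num
    _ ≤ ((|S2 (j+1)| : ℤ) : ℝ) := by exact_mod_cast this
    _ = |(S2 (j+1) : ℝ)| := by push_cast; ring
  have hS2ne : ∀ j, (S2 (j+1) : ℝ) ≠ 0 := by
    intro j h
    have := hS2big j
    rw [h] at this; simp at this; linarith
  -- the error term tends to 0
  have herr : Tendsto (fun j : ℕ => a ^ j / (S2 j : ℝ)) atTop (nhds 0) := by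
    have hbound : ∀ j : ℕ, 1 ≤ j → ‖a ^ j / (S2 j : ℝ)‖ ≤ a ^ j / 2 := by
      intro j hj
      obtain ⟨k, rfl⟩ := Nat.exists_eq_add_of_le hj
      rw [add_comm]
      rw [norm_div, norm_pow, Real.norm_eq_abs, Real.norm_eq_abs, abs_of_nonneg ha0]
      apply div_le_div_of_nonneg_left (by positivity) (by norm_num) (hS2big k)
    have htop : Tendsto (fun j : ℕ => a ^ j / 2) atTop (nhds 0) := by
      have := tendsto_pow_atTop_nhds_zero_of_lt_one ha0 ha1
      have h2 := this.div_const 2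
      simpa using h2
    apply squeeze_zero_norm' _ htop
    filter_upwards [eventually_ge_atTop 1] with j hj using hbound j hj
  -- conclude
  have hmain : Tendsto (fun j : ℕ => L + a ^ j / (S2 j : ℝ)) atTop (nhds L) := by
    have := herr.const_add L
    simpa using this
  have heq : ∀ᶠ j in atTop, L + a ^ j / (S2 j : ℝ) = (S1 j : ℝ) / (S2 j : ℝ) := by
    filter_upwards [eventually_ge_atTop 1] with j hj
    obtain ⟨k, rfl⟩ := Nat.exists_eq_add_of_le hj
    have hne : (S2 (1+k) : ℝ) ≠ 0 := by rw [add_comm]; exact hS2ne k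
    rw [key (1+k)]
    field_simp
  exact (Tendsto.congr' heq hmain)
end

section
/- Define sequences T⁽¹⁾, T⁽²⁾ : ℕ → ℤ by T⁽¹⁾₀ = 1, T⁽²⁾₀ = 0, T⁽¹⁾₁ = 0, T⁽²⁾₁ = 2 (i.e. (T⁽¹⁾₁,T⁽²⁾₁)ᵀ = R'·(1,0)ᵀ with R' = [[0,1],[2,2]]), and Tⱼ⁽ⁱ⁾ = 2Tⱼ₋₁⁽ⁱ⁾ + 2Tⱼ₋₂⁽ⁱ⁾ for j ≥ 2. Then T⁽¹⁾ⱼ / T⁽²⁾ⱼ tends to (-1+√3)/2 as j → ∞. -/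
open Filter Topology

/-!
With `α, β = 1 ± √3` the roots of `x² = 2x + 2`, both `T2` and `T1 - r • T2` (for
`r = (-1 + √3) / 2`) solve the recurrence, so comparing initial values gives
`T2 j = (αʲ - βʲ) / √3` and `T1 j = r * T2 j + βʲ`. Hence
`T1 j / T2 j = r + √3 βʲ / (αʲ - βʲ)`, and the error term tends to `0` because `|β| < α`.
-/

namespace LinearRecurrence

variable {R : Type*} [CommSemiring R]

def ofOrderTwo (a b : R) : LinearRecurrence R := ⟨2, ![b, a]⟩

variable {a b : R} {u v : ℕ → R}

theorem isSolution_ofOrderTwo_iff :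
    (ofOrderTwo a b).IsSolution u ↔ ∀ n, u (n + 2) = a * u (n + 1) + b * u n := by
  change (∀ n, u (n + 2) = ∑ i : Fin 2, ![b, a] i * u (n + i)) ↔ _
  simp only [Fin.sum_univ_two, Matrix.cons_val_zero, Matrix.cons_val_one, Fin.val_zero,
    Fin.val_one, add_zero, add_comm (b * _)]

theorem isSolution_ofOrderTwo_pow_iff {q : R} :
    ((ofOrderTwo a b).IsSolution fun n => q ^ n) ↔ q ^ 2 = a * q + b := by
  rw [isSolution_ofOrderTwo_iff]
  refine ⟨fun h => by simpa using h 0, fun h n => ?_⟩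
  calc q ^ (n + 2) = q ^ 2 * q ^ n := by ring
    _ = a * q ^ (n + 1) + b * q ^ n := by rw [h]; ring

theorem eq_of_isSolution_ofOrderTwo (hu : (ofOrderTwo a b).IsSolution u)
    (hv : (ofOrderTwo a b).IsSolution v) (h0 : u 0 = v 0) (h1 : u 1 = v 1) : u = v := by
  refine ((ofOrderTwo a b).eq_iff_eqOn_range_order u v hu hv).2 fun n hn => ?_
  obtain rfl | rfl : n = 0 ∨ n = 1 := by
    simp only [ofOrderTwo, Finset.coe_range, Set.mem_Iio] at hn; omega
  exacts [h0, h1]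

end LinearRecurrence

theorem tendsto_pow_div_pow_sub_pow {α β : ℝ} (h : |β| < α) :
    Tendsto (fun j : ℕ => β ^ j / (α ^ j - β ^ j)) atTop (𝓝 0) := by
  have hα : 0 < α := (abs_nonneg β).trans_lt h
  have hq : Tendsto (fun j : ℕ => (β / α) ^ j) atTop (𝓝 0) :=
    tendsto_pow_atTop_nhds_zero_of_abs_lt_one <| by
      rwa [abs_div, abs_of_pos hα, div_lt_one hα]
  have hlim := hq.div (tendsto_const_nhds.sub hq) (by norm_num : (1 : ℝ) - 0 ≠ 0)
  rw [zero_div] at hlim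
  refine hlim.congr fun j => ?_
  have hαj : α ^ j ≠ 0 := (pow_pos hα j).ne'
  rw [Pi.div_apply, div_pow, one_sub_div hαj, div_div_div_cancel_right₀ hαj]

theorem tendsto_div_of_eq_mul_add_pow {u v : ℕ → ℝ} {α β c r : ℝ}
    (hβα : |β| < α) (hc : c ≠ 0)
    (hv : ∀ j, v j = c * (α ^ j - β ^ j)) (hu : ∀ j, u j = r * v j + β ^ j) :
    Tendsto (fun j => u j / v j) atTop (𝓝 r) := by
  have hlim := (tendsto_pow_div_pow_sub_pow hβα).const_mul c⁻¹ |>.const_add r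
  rw [mul_zero, add_zero] at hlim
  refine hlim.congr' ?_
  filter_upwards [eventually_ne_atTop 0] with j hj
  have hαβ : α ^ j - β ^ j ≠ 0 := sub_ne_zero.2 <| ne_of_gt <|
    (le_abs_self _).trans_lt <| (abs_pow β j).trans_lt <|
      pow_lt_pow_left₀ hβα (abs_nonneg β) hj
  rw [hu, hv]
  field_simp

open LinearRecurrence in
theorem ratio_tendsto_other_root
    (T1 T2 : ℕ → ℤ)
    (h10 : T1 0 = 1) (h11 : T1 1 = 0) (h20 : T2 0 = 0) (h21 : T2 1 = 2)
    (hrec1 : ∀ j, T1 (j + 2) = 2 * T1 (j + 1) + 2 * T1 j)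
    (hrec2 : ∀ j, T2 (j + 2) = 2 * T2 (j + 1) + 2 * T2 j) :
    Tendsto (fun j => (T1 j : ℝ) / (T2 j)) atTop
      (nhds ((-1 + Real.sqrt 3) / 2)) := by
  set E := ofOrderTwo (2 : ℝ) 2
  set α := 1 + √3
  set β := 1 - √3
  have h3 : √3 ^ 2 = 3 := Real.sq_sqrt (by norm_num)
  have hT : ∀ T : ℕ → ℤ, (∀ j, T (j + 2) = 2 * T (j + 1) + 2 * T j) →
      E.IsSolution fun j => (T j : ℝ) :=
    fun T hrec => isSolution_ofOrderTwo_iff.2 fun n => by simp [hrec]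
  have hα : E.IsSolution (α ^ ·) := isSolution_ofOrderTwo_pow_iff.2 (by linear_combination h3)
  have hβ : E.IsSolution (β ^ ·) := isSolution_ofOrderTwo_pow_iff.2 (by linear_combination h3)
  have hbinet : (fun j => (T2 j : ℝ)) = (√3)⁻¹ • ((α ^ ·) - (β ^ ·)) :=
    eq_of_isSolution_ofOrderTwo (hT T2 hrec2) (E.solSpace.smul_mem _ (sub_mem hα hβ))
      (by simp [h20])
      (by simp only [h21, Int.cast_ofNat, Pi.smul_apply, Pi.sub_apply, pow_one,
        add_sub_sub_cancel, smul_eq_mul, α, β]; field_simp; ring)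
  have herr : (fun j => (T1 j : ℝ)) - ((-1 + √3) / 2) • (fun j => (T2 j : ℝ)) = (β ^ ·) :=
    eq_of_isSolution_ofOrderTwo (sub_mem (hT T1 hrec1) (E.solSpace.smul_mem _ (hT T2 hrec2))) hβ
      (by simp [h10, h20])
      (by
        simp only [Pi.sub_apply, Pi.smul_apply, smul_eq_mul, h11, h21, pow_one, β]
        push_cast; ring)
  refine tendsto_div_of_eq_mul_add_pow (α := α) (β := β) ?_ (inv_ne_zero (by positivity))
    (fun j => congrFun hbinet j) (fun j => ?_)
  · have : 0 < √3 := by positivity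
    exact abs_sub_lt_iff.2 ⟨by linarith, by linarith⟩
  · have := congrFun herr j
    simp only [Pi.sub_apply, Pi.smul_apply, smul_eq_mul] at this
    linarith
end

section
/- Let σ be the substitution B → BG, G → GR, R → RBB, and let gᵢ, rᵢ denote the number of G's and R's, respectively, in σⁱ(B). Then gᵢ/rᵢ → 2^{1/3} as i → ∞. -/
/-!
Let `a = 2^{1/3}` and let `(b, g, r)` be the letter counts of `σⁱ(B)`, so that one step of `σ` acts by
`M = [[1,0,2],[1,1,0],[0,1,1]]`. Since `(1, a, a²)` is a left eigenvector of `M` for `1 + a`, the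
Perron form `b + a g + a² r` equals `(1 + a)ⁱ`. The other eigenvalues are `1 + ωa` and `1 + ω²a`
(`ω` a primitive cube root of unity), and `(b - a g)² + (a g - a² r)² + (a² r - b)²`, which is twice
`|b + ωa g + ω²a² r|²`, is multiplied by `|1 + ωa|² = 1 - a + a²` at each step. As
`1 - a + a² < (1 + a)²`, the three numbers `b`, `a g`, `a² r` agree up to `o((1 + a)ⁱ)` while their
sum is `(1 + a)ⁱ`, so `g / r → a`.
-/

open Filter

/-- The substitution B → BG, G → GR, R → RBB on Fin 3 (B = 0, G = 1, R = 2). -/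
def sigmaSub : Fin 3 → List (Fin 3) := ![[0, 1], [1, 2], [2, 0, 0]]

/-- The i-th iterate of the substitution applied to the single-letter word B. -/
def sigmaIter (i : ℕ) : List (Fin 3) :=
  (fun w : List (Fin 3) => w.flatMap sigmaSub)^[i] [0]

open Topology Matrix

section Substitution

variable {α : Type*} [Fintype α] [DecidableEq α]

/-- `substMatrix f a c` is the number of occurrences of `a` in `f c`. -/
def substMatrix (f : α → List α) : Matrix α α ℕ := fun a c => (f c).count a

def countVec (w : List α) : α → ℕ := fun a => w.count a

theorem countVec_flatMap (f : α → List α) (w : List α) :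
    countVec (w.flatMap f) = substMatrix f *ᵥ countVec w := by
  ext a
  induction w with
  | nil => simp [countVec, mulVec, dotProduct]
  | cons c w ih =>
    simp only [countVec, mulVec, dotProduct, substMatrix] at ih ⊢
    simp only [List.flatMap_cons, List.count_append, ih, List.count_cons, mul_add,
      Finset.sum_add_distrib, beq_iff_eq, mul_ite, mul_one, mul_zero, Finset.sum_ite_eq,
      Finset.mem_univ, ↓reduceIte]
    ring

end Substitution

theorem tendsto_zero_of_sq_le {ι : Type*} {l : Filter ι} {u t : ι → ℝ} (hle : ∀ i, u i ^ 2 ≤ t i)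
    (ht : Tendsto t l (𝓝 0)) : Tendsto u l (𝓝 0) := by
  have hsqrt : Tendsto (fun i => √(t i)) l (𝓝 0) := by simpa using ht.sqrt
  refine squeeze_zero_norm (fun i => ?_) hsqrt
  rw [Real.norm_eq_abs, ← Real.sqrt_sq_eq_abs]
  exact Real.sqrt_le_sqrt (hle i)

theorem tendsto_div_of_sq_sub_div_sq_tendsto_zero {ι : Type*} {l : Filter ι} {x y z : ι → ℝ}
    (hs : ∀ i, x i + y i + z i ≠ 0)
    (h : Tendsto (fun i => ((x i - y i) ^ 2 + (y i - z i) ^ 2 + (z i - x i) ^ 2) /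
      (x i + y i + z i) ^ 2) l (𝓝 0)) :
    Tendsto (fun i => y i / z i) l (𝓝 1) := by
  set s := fun i => x i + y i + z i
  have hyz : Tendsto (fun i => (y i - z i) / s i) l (𝓝 0) := by
    refine tendsto_zero_of_sq_le (fun i => ?_) h
    rw [div_pow]
    gcongr
    nlinarith [sq_nonneg (x i - y i), sq_nonneg (z i - x i)]
  have hzx : Tendsto (fun i => (z i - x i) / s i) l (𝓝 0) := by
    refine tendsto_zero_of_sq_le (fun i => ?_) h
    rw [div_pow]
    gcongr
    nlinarith [sq_nonneg (x i - y i), sq_nonneg (y i - z i)]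
  have hz : Tendsto (fun i => z i / s i) l (𝓝 (1 / 3)) := by
    have h3 := ((hzx.sub hyz).const_add 1).div_const 3
    rw [sub_zero, add_zero] at h3
    refine h3.congr fun i => ?_
    simp only [s]
    field_simp [hs i]
    ring
  have hy : Tendsto (fun i => y i / s i) l (𝓝 (1 / 3)) := by
    refine (add_zero (1 / 3 : ℝ) ▸ hz.add hyz).congr fun i => ?_
    ring
  refine ((hy.div hz (by norm_num)).congr fun i => ?_).trans (by norm_num)
  exact div_div_div_cancel_right₀ (hs i) _ _

theorem substMatrix_sigmaSub : substMatrix sigmaSub = !![1, 0, 2; 1, 1, 0; 0, 1, 1] := by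
  ext a c
  fin_cases a <;> fin_cases c <;> rfl

theorem substMatrix_sigmaSub_mulVec (v : Fin 3 → ℕ) :
    substMatrix sigmaSub *ᵥ v = ![v 0 + 2 * v 2, v 0 + v 1, v 1 + v 2] := by
  rw [substMatrix_sigmaSub]
  ext k
  fin_cases k <;> simp [mulVec, dotProduct, Fin.sum_univ_three]

theorem countVec_sigmaIter_zero : countVec (sigmaIter 0) = ![1, 0, 0] := by
  ext k
  fin_cases k <;> rfl

theorem countVec_sigmaIter_succ (i : ℕ) :
    countVec (sigmaIter (i + 1)) = substMatrix sigmaSub *ᵥ countVec (sigmaIter i) := by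
  rw [← countVec_flatMap, sigmaIter, Function.iterate_succ_apply']
  rfl

section CubeRootOfTwo

variable {R : Type*} [CommRing R] {a : R}

def perronForm (a : R) (v : Fin 3 → ℕ) : R := v 0 + a * v 1 + a ^ 2 * v 2

def defectForm (a : R) (v : Fin 3 → ℕ) : R :=
  (v 0 - a * v 1) ^ 2 + (a * v 1 - a ^ 2 * v 2) ^ 2 + (a ^ 2 * v 2 - v 0) ^ 2

theorem perronForm_substMatrix_sigmaSub_mulVec (ha : a ^ 3 = 2) (v : Fin 3 → ℕ) :
    perronForm a (substMatrix sigmaSub *ᵥ v) = (1 + a) * perronForm a v := by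
  simp only [perronForm, substMatrix_sigmaSub_mulVec, cons_val, Nat.cast_add,
    Nat.cast_mul, Nat.cast_ofNat]
  linear_combination -(v 2 : R) * ha

theorem defectForm_substMatrix_sigmaSub_mulVec (ha : a ^ 3 = 2) (v : Fin 3 → ℕ) :
    defectForm a (substMatrix sigmaSub *ᵥ v) = (1 - a + a ^ 2) * defectForm a v := by
  simp only [defectForm, substMatrix_sigmaSub_mulVec, cons_val, Nat.cast_add,
    Nat.cast_mul, Nat.cast_ofNat]
  set b : R := (v 0 : R)
  set g : R := (v 1 : R)
  set r : R := (v 2 : R)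
  linear_combination (-2 * a ^ 3 * r ^ 2 + 2 * a ^ 2 * g * r + 2 * a ^ 2 * r ^ 2 + 2 * a * b * r
    + 2 * a * g * r - 4 * b * r - 4 * r ^ 2) * ha

theorem perronForm_sigmaIter (ha : a ^ 3 = 2) (i : ℕ) :
    perronForm a (countVec (sigmaIter i)) = (1 + a) ^ i := by
  induction i with
  | zero => simp [countVec_sigmaIter_zero, perronForm]
  | succ i ih =>
    rw [countVec_sigmaIter_succ, perronForm_substMatrix_sigmaSub_mulVec ha, ih, pow_succ']

theorem defectForm_sigmaIter (ha : a ^ 3 = 2) (i : ℕ) :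
    defectForm a (countVec (sigmaIter i)) = 2 * (1 - a + a ^ 2) ^ i := by
  induction i with
  | zero => norm_num [countVec_sigmaIter_zero, defectForm, cons_val_two]
  | succ i ih =>
    rw [countVec_sigmaIter_succ, defectForm_substMatrix_sigmaSub_mulVec ha, ih]
    ring

end CubeRootOfTwo

theorem tendsto_defectForm_div_perronForm_sq_sigmaIter {a : ℝ} (ha : a ^ 3 = 2) (ha0 : 0 < a) :
    Tendsto (fun i => defectForm a (countVec (sigmaIter i)) /
      perronForm a (countVec (sigmaIter i)) ^ 2) atTop (𝓝 0) := by
  have hρ : (1 - a + a ^ 2) / (1 + a) ^ 2 < 1 := by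
    rw [div_lt_one (by positivity)]
    nlinarith
  have hρ0 : 0 ≤ (1 - a + a ^ 2) / (1 + a) ^ 2 := by
    apply div_nonneg _ (by positivity)
    nlinarith [sq_nonneg (a - 1 / 2)]
  have hdecay := (tendsto_pow_atTop_nhds_zero_of_lt_one hρ0 hρ).const_mul 2
  rw [mul_zero] at hdecay
  refine hdecay.congr fun i => ?_
  rw [defectForm_sigmaIter ha, perronForm_sigmaIter ha, div_pow, ← pow_mul, ← pow_mul, mul_comm 2 i,
    pow_mul]
  ring

theorem count_ratio_tendsto_cbrt_two :
    Tendsto (fun i => ((sigmaIter i).count (1 : Fin 3) : ℝ) /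
        ((sigmaIter i).count (2 : Fin 3) : ℝ)) atTop
      (nhds ((2 : ℝ) ^ ((1 : ℝ) / 3))) := by
  set a : ℝ := 2 ^ ((1 : ℝ) / 3)
  have ha : a ^ 3 = 2 := by
    rw [← Real.rpow_natCast, ← Real.rpow_mul (by norm_num)]
    norm_num
  have ha0 : 0 < a := by positivity
  have hratio := tendsto_div_of_sq_sub_div_sq_tendsto_zero
    (x := fun i => (countVec (sigmaIter i) 0 : ℝ)) (y := fun i => a * countVec (sigmaIter i) 1)
    (z := fun i => a ^ 2 * countVec (sigmaIter i) 2)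
    (fun i => (perronForm_sigmaIter ha i).trans_ne (by positivity))
    (tendsto_defectForm_div_perronForm_sq_sigmaIter ha ha0)
  refine (mul_one a ▸ hratio.const_mul a).congr fun i => ?_
  simp only [countVec]
  rw [pow_two, mul_assoc, mul_div_mul_left _ _ ha0.ne', ← mul_div_assoc, mul_div_mul_left _ _ ha0.ne']
end
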